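/- Let p = log_3(27/4) and n₁, n₂ ≥ 1. If the inequality ∑_{x+y+z=1ⁿ} f(x)g(y)h(z) ≤ ‖f‖_p‖g‖_p‖h‖_p holds for all nonnegative functions on {0,1}^{n₁} and for all nonnegative functions on {0,1}^{n₂}, then it holds for all nonnegative functions on {0,1}^{n₁+n₂}. -/
import Mathlib


/-- The trilinear convolution form `f*g*h(1ⁿ)` on the cube `{0,1}ⁿ ⊆ ℤⁿ`. -/
def triForm (n : ℕ) (f g h : (Fin n → Bool) → ℝ) : ℝ :=
  ∑ x : Fin n → Bool, ∑ y : Fin n → Bool, ∑ z : Fin n → Bool,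
    if ∀ i : Fin n, ((if x i then (1 : ℤ) else 0) + (if y i then 1 else 0)
      + (if z i then 1 else 0) = 1) then f x * g y * h z else 0

/-- The convolution inequality with exponent `p = log₃(27/4)` holds in dimension `n`. -/
def ConvIneq (n : ℕ) : Prop :=
  ∀ f g h : (Fin n → Bool) → ℝ,
    (∀ x, 0 ≤ f x) → (∀ x, 0 ≤ g x) → (∀ x, 0 ≤ h x) →
    triForm n f g h ≤
      (∑ x : Fin n → Bool, f x ^ (Real.log (27 / 4) / Real.log 3))
        ^ (1 / (Real.log (27 / 4) / Real.log 3)) *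
      (∑ x : Fin n → Bool, g x ^ (Real.log (27 / 4) / Real.log 3))
        ^ (1 / (Real.log (27 / 4) / Real.log 3)) *
      (∑ x : Fin n → Bool, h x ^ (Real.log (27 / 4) / Real.log 3))
        ^ (1 / (Real.log (27 / 4) / Real.log 3))

/-- Splitting the cube `{0,1}^{n₁+n₂}` as a product of two cubes. -/
def cubeEquiv (n₁ n₂ : ℕ) : ((Fin n₁ → Bool) × (Fin n₂ → Bool)) ≃ (Fin (n₁ + n₂) → Bool) :=
  (Equiv.sumArrowEquivProdArrow _ _ _).symm.trans
    (Equiv.arrowCongr finSumFinEquiv (Equiv.refl _))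

lemma cubeEquiv_apply {n₁ n₂ : ℕ} (a : Fin n₁ → Bool) (b : Fin n₂ → Bool)
    (x : Fin (n₁ + n₂)) :
    cubeEquiv n₁ n₂ (a, b) x = Sum.elim a b (finSumFinEquiv.symm x) := rfl

lemma sum_cube_split {n₁ n₂ : ℕ} (φ : (Fin (n₁ + n₂) → Bool) → ℝ) :
    ∑ x : Fin (n₁ + n₂) → Bool, φ x
      = ∑ a : Fin n₁ → Bool, ∑ b : Fin n₂ → Bool, φ (cubeEquiv n₁ n₂ (a, b)) := by
  rw [← Equiv.sum_comp (cubeEquiv n₁ n₂) φ, Fintype.sum_prod_type]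

lemma forall_fin_add_split {n₁ n₂ : ℕ} (Q : Fin (n₁ + n₂) → Prop) :
    (∀ i, Q i) ↔ ((∀ i : Fin n₁, Q (finSumFinEquiv (Sum.inl i))) ∧
      (∀ j : Fin n₂, Q (finSumFinEquiv (Sum.inr j)))) := by
  constructor
  · exact fun h => ⟨fun i => h _, fun j => h _⟩
  · rintro ⟨ha, hb⟩ i
    have : i = finSumFinEquiv (finSumFinEquiv.symm i) := (finSumFinEquiv.apply_symm_apply i).symm
    rw [this]
    rcases finSumFinEquiv.symm i with j | j
    · exact ha j
    · exact hb j

lemma sum_comm₃ {α β γ : Type*} [Fintype α] [Fintype β] [Fintype γ] (T : α → β → γ → ℝ) :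
    ∑ a, ∑ b, ∑ c, T a b c = ∑ c, ∑ a, ∑ b, T a b c :=
  (Finset.sum_congr rfl fun a _ => Finset.sum_comm).trans Finset.sum_comm

theorem stmt_3 (n₁ n₂ : ℕ) (hn₁ : 1 ≤ n₁) (hn₂ : 1 ≤ n₂)
    (h₁ : ConvIneq n₁) (h₂ : ConvIneq n₂) : ConvIneq (n₁ + n₂) := by
  intro f g h hf hg hh
  set p : ℝ := Real.log (27 / 4) / Real.log 3 with hp
  have hp0 : 0 < p := div_pos (Real.log_pos (by norm_num)) (Real.log_pos (by norm_num))
  set E := cubeEquiv n₁ n₂ with hE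
  -- slice norms
  set F : (Fin n₁ → Bool) → ℝ := fun a => (∑ b, (f (E (a, b))) ^ p) ^ (1 / p) with hFdef
  set G : (Fin n₁ → Bool) → ℝ := fun a => (∑ b, (g (E (a, b))) ^ p) ^ (1 / p) with hGdef
  set H : (Fin n₁ → Bool) → ℝ := fun a => (∑ b, (h (E (a, b))) ^ p) ^ (1 / p) with hHdef
  have hF : ∀ a, 0 ≤ F a := fun a => Real.rpow_nonneg
    (Finset.sum_nonneg fun b _ => Real.rpow_nonneg (hf _) _) _
  have hG : ∀ a, 0 ≤ G a := fun a => Real.rpow_nonneg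
    (Finset.sum_nonneg fun b _ => Real.rpow_nonneg (hg _) _) _
  have hH : ∀ a, 0 ≤ H a := fun a => Real.rpow_nonneg
    (Finset.sum_nonneg fun b _ => Real.rpow_nonneg (hh _) _) _
  -- the condition splits
  have condsplit : ∀ (a₁ b₁ c₁ : Fin n₁ → Bool) (a₂ b₂ c₂ : Fin n₂ → Bool),
      (∀ i : Fin (n₁ + n₂), ((if E (a₁, a₂) i then (1 : ℤ) else 0)
          + (if E (b₁, b₂) i then 1 else 0) + (if E (c₁, c₂) i then 1 else 0) = 1))
        ↔ ((∀ i : Fin n₁, ((if a₁ i then (1 : ℤ) else 0) + (if b₁ i then 1 else 0)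
            + (if c₁ i then 1 else 0) = 1))
          ∧ (∀ i : Fin n₂, ((if a₂ i then (1 : ℤ) else 0) + (if b₂ i then 1 else 0)
            + (if c₂ i then 1 else 0) = 1))) := by
    intro a₁ b₁ c₁ a₂ b₂ c₂
    rw [forall_fin_add_split]
    simp [hE, cubeEquiv_apply]
  -- step 1: split triForm
  have split : triForm (n₁ + n₂) f g h =
      ∑ a₁ : Fin n₁ → Bool, ∑ b₁ : Fin n₁ → Bool, ∑ c₁ : Fin n₁ → Bool,
        if (∀ i : Fin n₁, ((if a₁ i then (1 : ℤ) else 0) + (if b₁ i then 1 else 0)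
            + (if c₁ i then 1 else 0) = 1)) then
          triForm n₂ (fun u => f (E (a₁, u))) (fun u => g (E (b₁, u))) (fun u => h (E (c₁, u)))
        else 0 := by
    unfold triForm
    simp only [sum_cube_split, hE]
    refine Finset.sum_congr rfl fun a₁ _ => ?_
    rw [Finset.sum_comm]
    refine Finset.sum_congr rfl fun b₁ _ => ?_
    rw [sum_comm₃]
    refine Finset.sum_congr rfl fun c₁ _ => ?_
    simp only [← hE, condsplit, ite_and]
    by_cases hc : (∀ i : Fin n₁, ((if a₁ i then (1 : ℤ) else 0) + (if b₁ i then 1 else 0)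
        + (if c₁ i then 1 else 0) = 1))
    · simp only [if_pos hc]
    · simp only [if_neg hc, Finset.sum_const_zero]
  -- step 2: apply h₂ to each slice
  have key : triForm (n₁ + n₂) f g h ≤ triForm n₁ F G H := by
    rw [split]
    unfold triForm
    refine Finset.sum_le_sum fun a₁ _ => Finset.sum_le_sum fun b₁ _ =>
      Finset.sum_le_sum fun c₁ _ => ?_
    by_cases hc : (∀ i : Fin n₁, ((if a₁ i then (1 : ℤ) else 0) + (if b₁ i then 1 else 0)
        + (if c₁ i then 1 else 0) = 1))
    · rw [if_pos hc, if_pos hc]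
      exact h₂ _ _ _ (fun u => hf _) (fun u => hg _) (fun u => hh _)
    · rw [if_neg hc, if_neg hc]
  -- step 3: the norms tensorize
  have norm_eq : ∀ (φ : (Fin (n₁ + n₂) → Bool) → ℝ), (∀ x, 0 ≤ φ x) →
      (∑ a : Fin n₁ → Bool, ((∑ b, (φ (E (a, b))) ^ p) ^ (1 / p)) ^ p) ^ (1 / p)
        = (∑ x, φ x ^ p) ^ (1 / p) := by
    intro φ hφ
    rw [sum_cube_split (fun x => φ x ^ p)]
    congr 1
    refine Finset.sum_congr rfl fun a _ => ?_
    rw [← Real.rpow_mul (Finset.sum_nonneg fun b _ => Real.rpow_nonneg (hφ _) _),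
      one_div_mul_cancel (ne_of_gt hp0), Real.rpow_one, hE]
  calc triForm (n₁ + n₂) f g h ≤ triForm n₁ F G H := key
    _ ≤ (∑ a, F a ^ p) ^ (1 / p) * (∑ a, G a ^ p) ^ (1 / p) * (∑ a, H a ^ p) ^ (1 / p) :=
        h₁ F G H hF hG hH
    _ = _ := by rw [hFdef, hGdef, hHdef]; rw [norm_eq f hf, norm_eq g hg, norm_eq h hh]
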